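/- Let n ≥ 1, let m be a real n×n matrix all of whose complex eigenvalues have strictly negative real part, let σ and θ₀ be real symmetric n×n matrices, β ∈ ℝ, x₀ a real symmetric n×n matrix, and define ς_t = ∫₀^t e^{(t−s)m} σ² e^{(t−s)m^⊤} ds and ς_∞ = ∫₀^∞ e^{s m} σ² e^{s m^⊤} ds. Assume det(I_n − 2ς_tθ₀) > 0 for every t ≥ 0 and det(I_n − 2ς_∞θ₀) > 0. Then ς_t → ς_∞ as t → ∞, a(t, θ₀) := e^{t m^⊤}(I_n − 2θ₀ς_t)^{−1} θ₀ e^{t m} → 0 as t → ∞, and consequently exp( tr(a(t, θ₀) x₀) ) · det(I_n − 2ς_tθ₀)^{−β/2} → det(I_n − 2ς_∞θ₀)^{−β/2} as t → ∞. -/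

import Mathlib

open Matrix MeasureTheory Filter Topology

section WishartAux
open NormedSpace Nat

lemma pow_le_factorial_mul_exp {x : ℝ} (hx : 0 ≤ x) (l : ℕ) :
    x ^ l ≤ (l ! : ℝ) * Real.exp x := by
  have h := Real.pow_div_factorial_le_exp x hx l
  have hl : (0:ℝ) < (l ! : ℝ) := by positivity
  rw [div_le_iff₀ hl] at h
  linarith [h]

lemma vec_decay {n : ℕ} (M : Matrix (Fin n) (Fin n) ℂ)
    (hM : ∀ μ ∈ spectrum ℂ M, μ.re < 0) (v : Fin n → ℂ) :
    ∃ C ε : ℝ, 0 < ε ∧ ∀ t : ℝ, 0 ≤ t →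
      ‖exp (t • M) *ᵥ v‖ ≤ C * Real.exp (-(ε * t)) := by
  letI : SeminormedRing (Matrix (Fin n) (Fin n) ℂ) := Matrix.linftyOpSemiNormedRing
  letI : NormedRing (Matrix (Fin n) (Fin n) ℂ) := Matrix.linftyOpNormedRing
  letI : NormedAlgebra ℝ (Matrix (Fin n) (Fin n) ℂ) := Matrix.linftyOpNormedAlgebra
  letI : NormedAlgebra ℂ (Matrix (Fin n) (Fin n) ℂ) := Matrix.linftyOpNormedAlgebra
  letI : NormedAlgebra ℚ (Matrix (Fin n) (Fin n) ℂ) := Matrix.linftyOpNormedAlgebra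
  letI : CompleteSpace (Matrix (Fin n) (Fin n) ℂ) := FiniteDimensional.complete ℂ _
  let S : Submodule ℂ (Fin n → ℂ) :=
  { carrier := {w | ∃ C ε : ℝ, 0 < ε ∧ ∀ t : ℝ, 0 ≤ t →
      ‖exp (t • M) *ᵥ w‖ ≤ C * Real.exp (-(ε * t))}
    add_mem' := by
      rintro a b ⟨C₁, ε₁, hε₁, h₁⟩ ⟨C₂, ε₂, hε₂, h₂⟩
      have hC₁ : 0 ≤ C₁ := by
        have := h₁ 0 le_rfl; simp at this; exact le_trans (norm_nonneg _) this
      have hC₂ : 0 ≤ C₂ := by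
        have := h₂ 0 le_rfl; simp at this; exact le_trans (norm_nonneg _) this
      refine ⟨C₁ + C₂, min ε₁ ε₂, lt_min hε₁ hε₂, fun t ht => ?_⟩
      rw [Matrix.mulVec_add]
      calc ‖exp (t • M) *ᵥ a + exp (t • M) *ᵥ b‖
          ≤ ‖exp (t • M) *ᵥ a‖ + ‖exp (t • M) *ᵥ b‖ := norm_add_le _ _
        _ ≤ C₁ * Real.exp (-(ε₁ * t)) + C₂ * Real.exp (-(ε₂ * t)) :=
            add_le_add (h₁ t ht) (h₂ t ht)
        _ ≤ C₁ * Real.exp (-(min ε₁ ε₂ * t)) + C₂ * Real.exp (-(min ε₁ ε₂ * t)) := by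
            gcongr
            · exact min_le_left _ _
            · exact min_le_right _ _
        _ = (C₁ + C₂) * Real.exp (-(min ε₁ ε₂ * t)) := by ring
    zero_mem' := ⟨0, 1, one_pos, fun t ht => by simp [Matrix.mulVec_zero]⟩
    smul_mem' := by
      rintro c w ⟨C, ε, hε, h⟩
      refine ⟨‖c‖ * C, ε, hε, fun t ht => ?_⟩
      rw [Matrix.mulVec_smul, norm_smul, mul_assoc]
      exact mul_le_mul_of_nonneg_left (h t ht) (norm_nonneg c) }
  have hS : ∀ μ : ℂ, Module.End.maxGenEigenspace (Matrix.toLinAlgEquiv' M : Module.End ℂ (Fin n → ℂ)) μ ≤ S := by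
    intro μ w hw
    rcases eq_or_ne w 0 with rfl | hw0
    · exact S.zero_mem
    obtain ⟨k, hk⟩ := (Module.End.mem_maxGenEigenspace _ _ _).mp hw
    have hμspec : μ ∈ spectrum ℂ M := by
      rw [← AlgEquiv.spectrum_eq (Matrix.toLinAlgEquiv' (R := ℂ)) M,
        ← Module.End.hasEigenvalue_iff_mem_spectrum]
      refine Module.End.hasEigenvalue_of_hasGenEigenvalue (k := k) ?_
      refine (Submodule.ne_bot_iff _).mpr ⟨w, ?_, hw0⟩
      exact Module.End.mem_genEigenspace_nat.mpr hk
    have hμ : μ.re < 0 := hM μ hμspec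
    set N : Matrix (Fin n) (Fin n) ℂ := M - μ • 1 with hN
    have hNk : (N ^ k) *ᵥ w = 0 := by
      have h1 : Matrix.toLinAlgEquiv' (N ^ k) = (Matrix.toLinAlgEquiv' M - μ • 1) ^ k := by
        rw [map_pow, map_sub, _root_.map_smul, _root_.map_one]
      calc (N ^ k) *ᵥ w = Matrix.toLinAlgEquiv' (N ^ k) w :=
            (Matrix.toLinAlgEquiv'_apply _ _).symm
        _ = 0 := by rw [h1]; exact hk
    set ε : ℝ := -μ.re / 2 with hε
    have hεpos : 0 < ε := by rw [hε]; linarith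
    refine ⟨∑ l ∈ Finset.range k, ε⁻¹ ^ l * ‖(N ^ l) *ᵥ w‖, ε, hεpos, fun t ht => ?_⟩
    -- splitting of the exponential
    have hz : t • (μ • (1 : Matrix (Fin n) (Fin n) ℂ)) = ((t : ℂ) * μ) • (1 : Matrix (Fin n) (Fin n) ℂ) := by
      rw [← smul_smul]
      exact (algebraMap_smul ℂ t (μ • (1 : Matrix (Fin n) (Fin n) ℂ))).symm
    have hexp1 : exp (((t : ℂ) * μ) • (1 : Matrix (Fin n) (Fin n) ℂ)) = Complex.exp ((t : ℂ) * μ) • (1 : Matrix (Fin n) (Fin n) ℂ) := by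
      rw [← Algebra.algebraMap_eq_smul_one]
      erw [← algebraMap_exp_comm (𝕂 := ℂ)]
      rw [Algebra.algebraMap_eq_smul_one]
      congr 1
      rw [Complex.exp_eq_exp_ℂ]
    have hMeq : t • M = ((t : ℂ) * μ) • (1 : Matrix (Fin n) (Fin n) ℂ) + t • N := by
      rw [← hz, ← smul_add]
      congr 1
      rw [hN]; abel
    have hcomm : Commute (((t : ℂ) * μ) • (1 : Matrix (Fin n) (Fin n) ℂ)) (t • N) :=
      ((Commute.one_left (t • N)).smul_left _)
    have hsplit : exp (t • M) = Complex.exp ((t : ℂ) * μ) • exp (t • N) := by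
      rw [hMeq]
      erw [NormedSpace.exp_add_of_commute hcomm]
      erw [hexp1]
      rw [smul_mul_assoc, one_mul]
      rfl
    -- the nilpotent part is a polynomial
    let L : Matrix (Fin n) (Fin n) ℂ →ₗ[ℝ] (Fin n → ℂ) :=
      { toFun := fun B => B *ᵥ w
        map_add' := fun B₁ B₂ => Matrix.add_mulVec B₁ B₂ w
        map_smul' := fun c B => Matrix.smul_mulVec c B w }
    let Lw : Matrix (Fin n) (Fin n) ℂ →L[ℝ] (Fin n → ℂ) :=
      { toLinearMap := L
        cont := continuous_id.matrix_mulVec continuous_const }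
    have htsum : exp (t • N) *ᵥ w = ∑' l : ℕ, (((l ! : ℝ)⁻¹) • (t • N) ^ l) *ᵥ w := by
      have := Lw.map_tsum (expSeries_summable' (𝕂 := ℝ) (t • N))
      rw [exp_eq_tsum (𝕂 := ℝ)]
      exact this
    have hzero : ∀ l, k ≤ l → ((N ^ l) *ᵥ w) = 0 := by
      intro l hl
      rw [← Nat.sub_add_cancel hl, pow_add, ← Matrix.mulVec_mulVec, hNk, Matrix.mulVec_zero]
    have hterm : exp (t • N) *ᵥ w
        = ∑ l ∈ Finset.range k, (((l !) : ℝ)⁻¹ * t ^ l) • ((N ^ l) *ᵥ w) := by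
      rw [htsum, tsum_eq_sum (s := Finset.range k) ?_]
      · refine Finset.sum_congr rfl fun l _ => ?_
        rw [Matrix.smul_mulVec, smul_pow, Matrix.smul_mulVec, smul_smul]
      · intro l hl
        rw [Finset.mem_range, not_lt] at hl
        rw [Matrix.smul_mulVec, smul_pow, Matrix.smul_mulVec, hzero l hl,
          smul_zero, smul_zero]
    have h1 : exp (t • M) *ᵥ w = Complex.exp ((t : ℂ) * μ) • (exp (t • N) *ᵥ w) := by
      rw [hsplit, Matrix.smul_mulVec]
    have hnexp : ‖Complex.exp ((t : ℂ) * μ)‖ = Real.exp (t * μ.re) := by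
      rw [Complex.norm_exp]
      congr 1
      simp [Complex.mul_re]
    rw [h1, norm_smul, hterm, hnexp]
    have hbound : ‖∑ l ∈ Finset.range k, (((l !) : ℝ)⁻¹ * t ^ l) • ((N ^ l) *ᵥ w)‖
        ≤ ∑ l ∈ Finset.range k, (ε⁻¹ ^ l * ‖(N ^ l) *ᵥ w‖) * Real.exp (ε * t) := by
      refine le_trans (norm_sum_le _ _) (Finset.sum_le_sum fun l _ => ?_)
      rw [norm_smul, Real.norm_eq_abs]
      have hc : |((l !) : ℝ)⁻¹ * t ^ l| = ((l !) : ℝ)⁻¹ * t ^ l := by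
        refine abs_of_nonneg ?_
        positivity
      rw [hc]
      have hl2 : ((l !) : ℝ)⁻¹ * t ^ l ≤ ε⁻¹ ^ l * Real.exp (ε * t) := by
        have h2 : (ε * t) ^ l ≤ ((l !) : ℝ) * Real.exp (ε * t) :=
          pow_le_factorial_mul_exp (by positivity) l
        rw [mul_pow] at h2
        have hfl : (0:ℝ) < ((l !) : ℝ) := by positivity
        have hεl : (0:ℝ) < ε ^ l := by positivity
        rw [inv_mul_le_iff₀ hfl]
        calc t ^ l = ε⁻¹ ^ l * (ε ^ l * t ^ l) := by
              rw [← mul_assoc, ← mul_pow, inv_mul_cancel₀ hεpos.ne', one_pow, one_mul]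
          _ ≤ ε⁻¹ ^ l * (((l !) : ℝ) * Real.exp (ε * t)) := by
              gcongr
          _ = ((l !) : ℝ) * (ε⁻¹ ^ l * Real.exp (ε * t)) := by ring
      calc ((l !) : ℝ)⁻¹ * t ^ l * ‖(N ^ l) *ᵥ w‖
          ≤ (ε⁻¹ ^ l * Real.exp (ε * t)) * ‖(N ^ l) *ᵥ w‖ :=
            mul_le_mul_of_nonneg_right hl2 (norm_nonneg _)
        _ = (ε⁻¹ ^ l * ‖(N ^ l) *ᵥ w‖) * Real.exp (ε * t) := by ring
    calc Real.exp (t * μ.re) * ‖∑ l ∈ Finset.range k, (((l !) : ℝ)⁻¹ * t ^ l) • ((N ^ l) *ᵥ w)‖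
        ≤ Real.exp (t * μ.re) *
          (∑ l ∈ Finset.range k, (ε⁻¹ ^ l * ‖(N ^ l) *ᵥ w‖) * Real.exp (ε * t)) :=
          mul_le_mul_of_nonneg_left hbound (Real.exp_nonneg _)
      _ = (∑ l ∈ Finset.range k, ε⁻¹ ^ l * ‖(N ^ l) *ᵥ w‖) *
          (Real.exp (t * μ.re) * Real.exp (ε * t)) := by
          rw [← Finset.sum_mul]; ring
      _ = (∑ l ∈ Finset.range k, ε⁻¹ ^ l * ‖(N ^ l) *ᵥ w‖) * Real.exp (-(ε * t)) := by
          rw [← Real.exp_add]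
          congr 2
          rw [hε]; ring
  have htop := Module.End.iSup_maxGenEigenspace_eq_top (Matrix.toLinAlgEquiv' M)
  have hvS : v ∈ S := by
    have hle : (⊤ : Submodule ℂ (Fin n → ℂ)) ≤ S := by
      rw [← htop]; exact iSup_le hS
    exact hle Submodule.mem_top
  obtain ⟨C, ε, hε, h⟩ := hvS
  exact ⟨C, ε, hε, h⟩

lemma entry_decay {n : ℕ} (m : Matrix (Fin n) (Fin n) ℝ)
    (hm : ∀ μ ∈ spectrum ℂ (m.map (Complex.ofReal · )), μ.re < 0) (i j : Fin n) :
    ∃ C ε : ℝ, 0 ≤ C ∧ 0 < ε ∧ ∀ t : ℝ, 0 ≤ t →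
      |exp (t • m) i j| ≤ C * Real.exp (-(ε * t)) := by
  obtain ⟨C, ε, hε, h⟩ := vec_decay (m.map (Complex.ofReal ·)) hm (Pi.single j 1)
  have hC : 0 ≤ C := by
    have := h 0 le_rfl; simp at this; exact le_trans (norm_nonneg _) this
  refine ⟨C, ε, hC, hε, fun t ht => ?_⟩
  have hmap : (exp (t • m)).map (Complex.ofReal ·)
      = exp (t • m.map (Complex.ofReal ·)) := by
    letI : SeminormedRing (Matrix (Fin n) (Fin n) ℂ) := Matrix.linftyOpSemiNormedRing
    letI : NormedRing (Matrix (Fin n) (Fin n) ℂ) := Matrix.linftyOpNormedRing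
    letI : NormedAlgebra ℝ (Matrix (Fin n) (Fin n) ℂ) := Matrix.linftyOpNormedAlgebra
    letI : SeminormedRing (Matrix (Fin n) (Fin n) ℝ) := Matrix.linftyOpSemiNormedRing
    letI : NormedRing (Matrix (Fin n) (Fin n) ℝ) := Matrix.linftyOpNormedRing
    letI : NormedAlgebra ℝ (Matrix (Fin n) (Fin n) ℝ) := Matrix.linftyOpNormedAlgebra
    letI : NormedAlgebra ℚ (Matrix (Fin n) (Fin n) ℝ) := Matrix.linftyOpNormedAlgebra
    have hcont : Continuous fun A : Matrix (Fin n) (Fin n) ℝ => A.map (Complex.ofReal ·) :=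
      continuous_id.matrix_map Complex.continuous_ofReal
    have h2 := map_exp (Complex.ofRealHom.mapMatrix (m := Fin n)) hcont (t • m)
    simp only [RingHom.mapMatrix_apply] at h2
    have h3 : (t • m).map (Complex.ofReal ·) = t • m.map (Complex.ofReal ·) := by
      ext i' j'
      simp [Matrix.map_apply, Complex.real_smul]
    rw [← h3]
    exact h2
  have hentry : (Complex.ofReal (exp (t • m) i j))
      = (exp (t • m.map (Complex.ofReal ·)) *ᵥ Pi.single j 1) i := by
    rw [Matrix.mulVec_single_one, ← hmap]
    simp [Matrix.map_apply, Matrix.transpose_apply]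
  calc |exp (t • m) i j| = ‖(Complex.ofReal (exp (t • m) i j))‖ := by
        rw [Complex.norm_real, Real.norm_eq_abs]
    _ = ‖(exp (t • m.map (Complex.ofReal ·)) *ᵥ Pi.single j 1) i‖ := by rw [hentry]
    _ ≤ ‖exp (t • m.map (Complex.ofReal ·)) *ᵥ Pi.single j 1‖ := norm_le_pi_norm _ i
    _ ≤ C * Real.exp (-(ε * t)) := h t ht

lemma spectrum_transpose {n : ℕ} (m : Matrix (Fin n) (Fin n) ℝ)
    (hm : ∀ μ ∈ spectrum ℂ (m.map (Complex.ofReal · )), μ.re < 0) :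
    ∀ μ ∈ spectrum ℂ (mᵀ.map (Complex.ofReal · )), μ.re < 0 := by
  intro μ hμ
  apply hm
  rw [spectrum.mem_iff] at hμ ⊢
  intro hunit
  apply hμ
  have heq : algebraMap ℂ (Matrix (Fin n) (Fin n) ℂ) μ - mᵀ.map (Complex.ofReal ·)
      = (algebraMap ℂ (Matrix (Fin n) (Fin n) ℂ) μ - m.map (Complex.ofReal ·))ᵀ := by
    rw [Matrix.transpose_sub, Matrix.transpose_map]
    congr 1
    rw [Algebra.algebraMap_eq_smul_one, Matrix.transpose_smul, Matrix.transpose_one]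
  rw [heq, Matrix.isUnit_iff_isUnit_det, Matrix.det_transpose,
    ← Matrix.isUnit_iff_isUnit_det]
  exact hunit

lemma det_one_sub_comm {n : ℕ} (A B : Matrix (Fin n) (Fin n) ℝ) :
    (1 - 2 • (A * B)).det = (1 - 2 • (B * A)).det := by
  have h1 : (1 : Matrix (Fin n) (Fin n) ℝ) - 2 • (A * B) = 1 + (-(2 • A)) * B := by
    rw [neg_mul, smul_mul_assoc, sub_eq_add_neg]
  have h2 : (1 : Matrix (Fin n) (Fin n) ℝ) - 2 • (B * A) = 1 + B * (-(2 • A)) := by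
    rw [mul_neg, mul_smul_comm, sub_eq_add_neg]
  rw [h1, h2, Matrix.det_one_add_mul_comm]

end WishartAux

/-- long-time behaviour of the Wishart moment generating function in the Bru
specification: `ς_t → ς_∞`, `a(t, θ₀) → 0`, and
`exp(tr(a(t,θ₀)x₀)) det(I − 2ς_tθ₀)^{−β/2} → det(I − 2ς_∞θ₀)^{−β/2}` as `t → ∞`. -/
theorem wishart_mgf_limit
    (n : ℕ) (hn : 1 ≤ n) (m σ θ₀ : Matrix (Fin n) (Fin n) ℝ)
    (hm : ∀ μ ∈ spectrum ℂ (m.map (Complex.ofReal · )), μ.re < 0)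
    (hσ : σ.IsSymm) (hθ₀ : θ₀.IsSymm) (β : ℝ)
    (x₀ : Matrix (Fin n) (Fin n) ℝ) (hx₀ : x₀.IsSymm)
    (ς : ℝ → Matrix (Fin n) (Fin n) ℝ)
    (hς : ∀ t, ∀ i j, ς t i j =
      ∫ s in (0 : ℝ)..t,
        (NormedSpace.exp ((t - s) • m) * σ ^ 2 * NormedSpace.exp ((t - s) • mᵀ)) i j)
    (ςinf : Matrix (Fin n) (Fin n) ℝ)
    (hςinf : ∀ i j, ςinf i j =
      ∫ s in Set.Ioi (0 : ℝ),
        (NormedSpace.exp (s • m) * σ ^ 2 * NormedSpace.exp (s • mᵀ)) i j)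
    (hdet : ∀ t : ℝ, 0 ≤ t → 0 < (1 - 2 • (ς t * θ₀)).det)
    (hdetinf : 0 < (1 - 2 • (ςinf * θ₀)).det)
    (a : ℝ → Matrix (Fin n) (Fin n) ℝ)
    (ha : ∀ t, a t =
      NormedSpace.exp (t • mᵀ) * (1 - 2 • (θ₀ * ς t))⁻¹ * θ₀ * NormedSpace.exp (t • m)) :
    Tendsto ς atTop (𝓝 ςinf) ∧
      Tendsto a atTop (𝓝 0) ∧
      Tendsto
        (fun t : ℝ =>
          Real.exp ((a t * x₀).trace) * ((1 - 2 • (ς t * θ₀)).det) ^ (-(β / 2)))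
        atTop (𝓝 (((1 - 2 • (ςinf * θ₀)).det) ^ (-(β / 2)))) := by
  have hmT := spectrum_transpose m hm
  -- continuity of the exponential paths
  have hc1 : Continuous fun s : ℝ => NormedSpace.exp (s • m) := by
    letI : SeminormedRing (Matrix (Fin n) (Fin n) ℝ) := Matrix.linftyOpSemiNormedRing
    letI : NormedRing (Matrix (Fin n) (Fin n) ℝ) := Matrix.linftyOpNormedRing
    letI : NormedAlgebra ℝ (Matrix (Fin n) (Fin n) ℝ) := Matrix.linftyOpNormedAlgebra
    letI : NormedAlgebra ℚ (Matrix (Fin n) (Fin n) ℝ) := Matrix.linftyOpNormedAlgebra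
    letI : CompleteSpace (Matrix (Fin n) (Fin n) ℝ) := FiniteDimensional.complete ℝ _
    exact NormedSpace.exp_continuous.comp (continuous_id.smul continuous_const)
  have hc2 : Continuous fun s : ℝ => NormedSpace.exp (s • mᵀ) := by
    letI : SeminormedRing (Matrix (Fin n) (Fin n) ℝ) := Matrix.linftyOpSemiNormedRing
    letI : NormedRing (Matrix (Fin n) (Fin n) ℝ) := Matrix.linftyOpNormedRing
    letI : NormedAlgebra ℝ (Matrix (Fin n) (Fin n) ℝ) := Matrix.linftyOpNormedAlgebra
    letI : NormedAlgebra ℚ (Matrix (Fin n) (Fin n) ℝ) := Matrix.linftyOpNormedAlgebra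
    letI : CompleteSpace (Matrix (Fin n) (Fin n) ℝ) := FiniteDimensional.complete ℝ _
    exact NormedSpace.exp_continuous.comp (continuous_id.smul continuous_const)
  -- integrability of the entries on (0, ∞)
  have hInt : ∀ i j : Fin n, IntegrableOn (fun s : ℝ =>
      (NormedSpace.exp (s • m) * σ ^ 2 * NormedSpace.exp (s • mᵀ)) i j)
      (Set.Ioi (0:ℝ)) volume := by
    intro i j
    have hrepr : ∀ s : ℝ, (NormedSpace.exp (s • m) * σ ^ 2 * NormedSpace.exp (s • mᵀ)) i j
        = ∑ q : Fin n, ∑ p : Fin n,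
            NormedSpace.exp (s • m) i p * (σ ^ 2) p q * NormedSpace.exp (s • mᵀ) q j := by
      intro s
      rw [Matrix.mul_apply]
      refine Finset.sum_congr rfl fun q _ => ?_
      rw [Matrix.mul_apply, Finset.sum_mul]
    have : IntegrableOn (fun s : ℝ => ∑ q : Fin n, ∑ p : Fin n,
        NormedSpace.exp (s • m) i p * (σ ^ 2) p q * NormedSpace.exp (s • mᵀ) q j)
        (Set.Ioi (0:ℝ)) volume := by
      apply MeasureTheory.integrable_finset_sum
      intro q _
      apply MeasureTheory.integrable_finset_sum
      intro p _
      obtain ⟨C₁, ε₁, hC₁, hε₁, h₁⟩ := entry_decay m hm i p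
      obtain ⟨C₂, ε₂, hC₂, hε₂, h₂⟩ := entry_decay mᵀ hmT q j
      have hmeas : AEStronglyMeasurable (fun s : ℝ =>
          NormedSpace.exp (s • m) i p * (σ ^ 2) p q * NormedSpace.exp (s • mᵀ) q j)
          (volume.restrict (Set.Ioi (0:ℝ))) := by
        refine Continuous.aestronglyMeasurable ?_
        exact ((hc1.matrix_elem i p).mul continuous_const).mul (hc2.matrix_elem q j)
      refine Integrable.mono'
        (g := fun s : ℝ => (C₁ * |(σ ^ 2) p q| * C₂) * Real.exp (-(ε₁ + ε₂) * s))
        ((exp_neg_integrableOn_Ioi 0 (by positivity)).const_mul _) hmeas ?_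
      filter_upwards [ae_restrict_mem measurableSet_Ioi] with s hs
      have hs' : (0:ℝ) ≤ s := le_of_lt hs
      have e1 := h₁ s hs'
      have e2 := h₂ s hs'
      rw [Real.norm_eq_abs, abs_mul, abs_mul]
      calc |NormedSpace.exp (s • m) i p| * |(σ ^ 2) p q| * |NormedSpace.exp (s • mᵀ) q j|
          ≤ (C₁ * Real.exp (-(ε₁ * s))) * |(σ ^ 2) p q| * (C₂ * Real.exp (-(ε₂ * s))) := by
            have h3 : (0:ℝ) ≤ C₂ * Real.exp (-(ε₂ * s)) := by positivity
            apply mul_le_mul (mul_le_mul e1 le_rfl (abs_nonneg _) (by positivity)) e2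
              (abs_nonneg _) (by positivity)
        _ = (C₁ * |(σ ^ 2) p q| * C₂) * Real.exp (-(ε₁ + ε₂) * s) := by
            have hee : Real.exp (-(ε₁ + ε₂) * s) = Real.exp (-(ε₁ * s)) * Real.exp (-(ε₂ * s)) := by
              rw [← Real.exp_add]; ring_nf
            rw [hee]; ring
    exact this.congr (Filter.EventuallyEq.symm (Filter.Eventually.of_forall hrepr))
  -- Part 1 : convergence of ς
  have hςlim : Tendsto ς atTop (𝓝 ςinf) := by
    refine tendsto_pi_nhds.mpr ?_
    intro i
    rw [tendsto_pi_nhds]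
    intro j
    have hcv : ∀ t : ℝ, ς t i j = ∫ s in (0:ℝ)..t,
        (NormedSpace.exp (s • m) * σ ^ 2 * NormedSpace.exp (s • mᵀ)) i j := by
      intro t
      rw [hς t i j]
      have := intervalIntegral.integral_comp_sub_left (a := 0) (b := t)
        (fun s : ℝ => (NormedSpace.exp (s • m) * σ ^ 2 * NormedSpace.exp (s • mᵀ)) i j) t
      simpa using this
    have hmain := MeasureTheory.intervalIntegral_tendsto_integral_Ioi 0 (hInt i j) tendsto_id
    rw [hςinf i j]
    refine hmain.congr fun t => ?_
    exact (hcv t).symm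
  -- decay of matrix exponentials
  have hexp0 : ∀ (b : Matrix (Fin n) (Fin n) ℝ),
      (∀ μ ∈ spectrum ℂ (b.map (Complex.ofReal · )), μ.re < 0) →
      Tendsto (fun t : ℝ => NormedSpace.exp (t • b)) atTop (𝓝 0) := by
    intro b hb
    refine tendsto_pi_nhds.mpr ?_
    intro i
    rw [tendsto_pi_nhds]
    intro j
    obtain ⟨C, ε, hC, hε, h⟩ := entry_decay b hb i j
    have hbound : Tendsto (fun t : ℝ => C * Real.exp (-(ε * t))) atTop (𝓝 0) := by
      have h1 : Tendsto (fun t : ℝ => ε * t) atTop atTop :=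
        Tendsto.const_mul_atTop hε tendsto_id
      have h2 := Real.tendsto_exp_neg_atTop_nhds_zero.comp h1
      have h3 := h2.const_mul C
      simpa using h3
    have h4 : Tendsto (fun t : ℝ => NormedSpace.exp (t • b) i j) atTop (𝓝 0) := by
      apply squeeze_zero_norm' ?_ hbound
      filter_upwards [eventually_ge_atTop (0:ℝ)] with t ht
      simpa [Real.norm_eq_abs] using h t ht
    simpa using h4
  have hexpm := hexp0 m hm
  have hexpmT := hexp0 mᵀ hmT
  -- the inverse factor
  have hdetWinf : ((1 : Matrix (Fin n) (Fin n) ℝ) - 2 • (θ₀ * ςinf)).det ≠ 0 := by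
    rw [det_one_sub_comm]; exact hdetinf.ne'
  have hWcont : Continuous fun X : Matrix (Fin n) (Fin n) ℝ => 1 - 2 • (θ₀ * X) := by
    have h5 : (fun X : Matrix (Fin n) (Fin n) ℝ => 1 - 2 • (θ₀ * X))
        = fun X => 1 - (θ₀ * X + θ₀ * X) := by
      funext X; rw [two_smul]
    rw [h5]
    exact continuous_const.sub ((continuous_const.matrix_mul continuous_id).add
      (continuous_const.matrix_mul continuous_id))
  have hW : Tendsto (fun t => 1 - 2 • (θ₀ * ς t)) atTop (𝓝 (1 - 2 • (θ₀ * ςinf))) :=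
    (hWcont.tendsto _).comp hςlim
  have hWinv : Tendsto (fun t => (1 - 2 • (θ₀ * ς t))⁻¹) atTop
      (𝓝 ((1 - 2 • (θ₀ * ςinf))⁻¹)) := by
    have hdet2 : Tendsto (fun t => ((1 - 2 • (θ₀ * ς t)).det)) atTop
        (𝓝 ((1 - 2 • (θ₀ * ςinf)).det)) := ((continuous_id.matrix_det).tendsto _).comp hW
    have hadj : Tendsto (fun t => (1 - 2 • (θ₀ * ς t)).adjugate) atTop
        (𝓝 ((1 - 2 • (θ₀ * ςinf)).adjugate)) :=
      ((continuous_id.matrix_adjugate).tendsto _).comp hW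
    have hmain := ((hdet2.inv₀ hdetWinf).smul hadj)
    have hrw : ∀ B : Matrix (Fin n) (Fin n) ℝ, B⁻¹ = (B.det)⁻¹ • B.adjugate := fun B => by
      rw [Matrix.inv_def, Ring.inverse_eq_inv]
    simp only [hrw]
    exact hmain
  have halim : Tendsto a atTop (𝓝 0) := by
    have hfun : a = fun t => NormedSpace.exp (t • mᵀ) * (1 - 2 • (θ₀ * ς t))⁻¹ * θ₀
        * NormedSpace.exp (t • m) := funext ha
    rw [hfun]
    have h6 := ((hexpmT.mul hWinv).mul (tendsto_const_nhds (x := θ₀))).mul hexpm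
    simpa using h6
  refine ⟨hςlim, halim, ?_⟩
  -- Part 3
  have htr : Tendsto (fun t => (a t * x₀).trace) atTop (𝓝 0) := by
    have hco : Continuous fun A : Matrix (Fin n) (Fin n) ℝ => (A * x₀).trace :=
      (continuous_id.matrix_mul continuous_const).matrix_trace
    have h7 := (hco.tendsto 0).comp halim
    simpa [Function.comp_def] using h7
  have hef : Tendsto (fun t => Real.exp ((a t * x₀).trace)) atTop (𝓝 1) := by
    have h8 := (Real.continuous_exp.tendsto 0).comp htr
    simpa [Function.comp_def] using h8
  have hdet3 : Tendsto (fun t => (1 - 2 • (ς t * θ₀)).det) atTop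
      (𝓝 ((1 - 2 • (ςinf * θ₀)).det)) := by
    have hcont : Continuous fun X : Matrix (Fin n) (Fin n) ℝ => (1 - 2 • (X * θ₀)).det := by
      have h9 : (fun X : Matrix (Fin n) (Fin n) ℝ => (1 - 2 • (X * θ₀)))
          = fun X => 1 - (X * θ₀ + X * θ₀) := by funext X; rw [two_smul]
      refine Continuous.matrix_det ?_
      rw [h9]
      exact continuous_const.sub ((continuous_id.matrix_mul continuous_const).add
        (continuous_id.matrix_mul continuous_const))
    exact (hcont.tendsto _).comp hςlim
  have hrpow : Tendsto (fun t => ((1 - 2 • (ς t * θ₀)).det) ^ (-(β / 2))) atTop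
      (𝓝 (((1 - 2 • (ςinf * θ₀)).det) ^ (-(β / 2)))) := by
    have hca : ContinuousAt (fun x : ℝ => x ^ (-(β / 2))) ((1 - 2 • (ςinf * θ₀)).det) :=
      Real.continuousAt_rpow_const _ _ (Or.inl hdetinf.ne')
    exact hca.tendsto.comp hdet3
  have hfin := hef.mul hrpow
  simpa using hfin
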